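/- arXiv:2210.11033 — 5 statements merged into one kernel-verified Lean document; each statement's English description precedes it below -/
import Mathlib

section
/- Let V be a finite ground set, let N ≥ 1, let λ ∈ [0, 1], let m^(0), m^(1), …, m^(N) be modular set functions with nonnegative weights, and let φ : [0, ∞) → [0, ∞) be nondecreasing and concave. Define the recursion F^(0)(S) := m^(0)(S) and F^(n)(S) := φ(λ · F^(n−1)(S) + (1 − λ) · m^(n)(S)) for 1 ≤ n ≤ N. Then F^(N) is a monotone submodular set function. -/
/-- Marginal gain `F(s|S) = F(S ∪ {s}) − F(S)`. A set function is *monotone* if all marginal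
gains are nonnegative. -/
def IsMonotoneSetFun {V : Type*} [DecidableEq V] (F : Finset V → ℝ) : Prop :=
  ∀ (S : Finset V) (s : V), s ∉ S → 0 ≤ F (insert s S) - F S

/-- A set function is *submodular* if `F(s|S) ≥ F(s|T)` whenever `S ⊆ T` and `s ∉ T`. -/
def IsSubmodular {V : Type*} [DecidableEq V] (F : Finset V → ℝ) : Prop :=
  ∀ (S T : Finset V) (s : V), S ⊆ T → s ∉ T →
    F (insert s T) - F T ≤ F (insert s S) - F S

/-! By induction on `n`, each `F⁽ⁿ⁾` is nonnegative, monotone and submodular: nonnegative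
combinations with a modular function preserve all three properties, and so does composition
with a nondecreasing concave `φ`, because a concave function has smaller increments at larger
arguments. -/

theorem ConcaveOn.map_add_sub_map_le {𝕜 : Type*} [Field 𝕜] [LinearOrder 𝕜]
    [IsStrictOrderedRing 𝕜] {s : Set 𝕜} {f : 𝕜 → 𝕜} (hf : ConcaveOn 𝕜 s f) {x y d : 𝕜}
    (hx : x ∈ s) (hyd : y + d ∈ s) (hxy : x ≤ y) (hd : 0 ≤ d) :
    f (y + d) - f y ≤ f (x + d) - f x := by
  rcases hd.eq_or_lt with rfl | hd
  · simp
  have hxd : x + d ∈ s := hf.1.ordConnected.out hx hyd ⟨by linarith, by linarith⟩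
  have hy : y ∈ s := hf.1.ordConnected.out hx hyd ⟨hxy, by linarith⟩
  have hslope : slope f y (y + d) ≤ slope f x (x + d) :=
    calc slope f y (y + d) = slope f (y + d) y := slope_comm f y (y + d)
      _ ≤ slope f (y + d) x :=
        hf.slope_anti hyd ⟨hx, (by linarith : x < y + d).ne⟩ ⟨hy, (by linarith : y < y + d).ne⟩ hxy
      _ = slope f x (y + d) := slope_comm f (y + d) x
      _ ≤ slope f x (x + d) :=
        hf.slope_anti hx ⟨hxd, (by linarith : x < x + d).ne'⟩ ⟨hyd, (by linarith : x < y + d).ne'⟩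
          (by linarith)
  simpa [slope_def_field, div_le_div_iff_of_pos_right hd] using hslope

section SetFunction

variable {V : Type*} [DecidableEq V] {F G : Finset V → ℝ}

theorem IsMonotoneSetFun.monotone (hF : IsMonotoneSetFun F) : Monotone F := by
  refine (monotone_iff_forall_covBy F).2 fun S T hST => ?_
  obtain ⟨s, hs, rfl⟩ := Finset.covBy_iff_exists_insert.1 hST
  exact sub_nonneg.1 (hF S s hs)

theorem isMonotoneSetFun_sum {w : V → ℝ} (hw : ∀ v, 0 ≤ w v) :
    IsMonotoneSetFun fun S => ∑ s ∈ S, w s := fun S s hs => by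
  simpa [Finset.sum_insert hs] using hw s

theorem isSubmodular_sum (w : V → ℝ) : IsSubmodular fun S => ∑ s ∈ S, w s :=
  fun S T s hST hsT => by
    simp [Finset.sum_insert hsT, Finset.sum_insert fun h => hsT (hST h)]

theorem IsMonotoneSetFun.add (hF : IsMonotoneSetFun F) (hG : IsMonotoneSetFun G) :
    IsMonotoneSetFun fun S => F S + G S :=
  fun S s hs => by linarith [hF S s hs, hG S s hs]

theorem IsSubmodular.add (hF : IsSubmodular F) (hG : IsSubmodular G) :
    IsSubmodular fun S => F S + G S :=
  fun S T s hST hsT => by linarith [hF S T s hST hsT, hG S T s hST hsT]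

theorem IsMonotoneSetFun.const_mul (hF : IsMonotoneSetFun F) {c : ℝ} (hc : 0 ≤ c) :
    IsMonotoneSetFun fun S => c * F S :=
  fun S s hs => by rw [← mul_sub]; exact mul_nonneg hc (hF S s hs)

theorem IsSubmodular.const_mul (hF : IsSubmodular F) {c : ℝ} (hc : 0 ≤ c) :
    IsSubmodular fun S => c * F S :=
  fun S T s hST hsT => by
    rw [← mul_sub, ← mul_sub]
    exact mul_le_mul_of_nonneg_left (hF S T s hST hsT) hc

variable {φ : ℝ → ℝ} {I : Set ℝ}

theorem IsMonotoneSetFun.comp_monotoneOn (hG : IsMonotoneSetFun G) (hφ : MonotoneOn φ I)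
    (hGI : ∀ S, G S ∈ I) : IsMonotoneSetFun fun S => φ (G S) :=
  fun S s hs => sub_nonneg.2 <| hφ (hGI S) (hGI _) (sub_nonneg.1 (hG S s hs))

theorem IsSubmodular.comp_concaveOn (hGs : IsSubmodular G) (hGm : IsMonotoneSetFun G)
    (hφm : MonotoneOn φ I) (hφc : ConcaveOn ℝ I φ) (hGI : ∀ S, G S ∈ I) :
    IsSubmodular fun S => φ (G S) := by
  intro S T s hST hsT
  set d := G (insert s T) - G T
  have hd : 0 ≤ d := hGm T s hsT
  have hdS : d ≤ G (insert s S) - G S := hGs S T s hST hsT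
  have hGST : G S ≤ G T := hGm.monotone hST
  have hSd : G S + d ∈ I :=
    hφc.1.ordConnected.out (hGI S) (hGI (insert s S)) ⟨by linarith, by linarith⟩
  calc φ (G (insert s T)) - φ (G T) = φ (G T + d) - φ (G T) := by rw [add_sub_cancel]
    _ ≤ φ (G S + d) - φ (G S) :=
      hφc.map_add_sub_map_le (hGI S) (by rw [add_sub_cancel]; exact hGI _) hGST hd
    _ ≤ φ (G (insert s S)) - φ (G S) :=
      sub_le_sub_right (hφm hSd (hGI _) (by linarith)) _

end SetFunction

theorem recursive_model_monotone_submodular_general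
    {V : Type*} [DecidableEq V]
    (N : ℕ)
    (lam : ℝ) (hlam : lam ∈ Set.Icc (0 : ℝ) 1)
    (w : ℕ → V → ℝ) (hw : ∀ n v, 0 ≤ w n v)
    (φ : ℝ → ℝ)
    (hφ_mono : MonotoneOn φ (Set.Ici 0))
    (hφ_conc : ConcaveOn ℝ (Set.Ici 0) φ)
    (hφ_nonneg : ∀ x ∈ Set.Ici (0 : ℝ), 0 ≤ φ x)
    (F : ℕ → Finset V → ℝ)
    (hF0 : ∀ S, F 0 S = ∑ s ∈ S, w 0 s)
    (hFrec : ∀ n, 1 ≤ n → n ≤ N → ∀ S : Finset V,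
      F n S = φ (lam * F (n - 1) S + (1 - lam) * ∑ s ∈ S, w n s)) :
    IsMonotoneSetFun (F N) ∧ IsSubmodular (F N) := by
  obtain ⟨hlam0, hlam1⟩ := hlam
  suffices h : ∀ n ≤ N, (∀ S, 0 ≤ F n S) ∧ IsMonotoneSetFun (F n) ∧ IsSubmodular (F n) from
    (h N le_rfl).2
  intro n hn
  induction n with
  | zero =>
    rw [funext hF0]
    exact ⟨fun S => Finset.sum_nonneg fun v _ => hw 0 v, isMonotoneSetFun_sum (hw 0),
      isSubmodular_sum (w 0)⟩
  | succ n ih =>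
    obtain ⟨hF_nonneg, hF_mono, hF_sub⟩ := ih (by omega)
    set G : Finset V → ℝ := fun S => lam * F n S + (1 - lam) * ∑ s ∈ S, w (n + 1) s
    have hG_nonneg : ∀ S, 0 ≤ G S := fun S =>
      add_nonneg (mul_nonneg hlam0 (hF_nonneg S))
        (mul_nonneg (sub_nonneg.2 hlam1) (Finset.sum_nonneg fun v _ => hw _ v))
    have hG_mono : IsMonotoneSetFun G :=
      (hF_mono.const_mul hlam0).add ((isMonotoneSetFun_sum (hw _)).const_mul (sub_nonneg.2 hlam1))
    have hG_sub : IsSubmodular G :=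
      (hF_sub.const_mul hlam0).add ((isSubmodular_sum _).const_mul (sub_nonneg.2 hlam1))
    rw [funext (hFrec (n + 1) (by omega) hn)]
    exact ⟨fun S => hφ_nonneg _ (hG_nonneg S), hG_mono.comp_monotoneOn hφ_mono hG_nonneg,
      hG_sub.comp_concaveOn hG_mono hφ_mono hφ_conc hG_nonneg⟩

/-- the recursion `F⁽⁰⁾(S) = m⁽⁰⁾(S)`,
`F⁽ⁿ⁾(S) = φ(λ·F⁽ⁿ⁻¹⁾(S) + (1−λ)·m⁽ⁿ⁾(S))` for `1 ≤ n ≤ N`, built from modular functions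
`m⁽ⁿ⁾(S) = ∑_{s∈S} w n s` with nonnegative weights and a nondecreasing concave
`φ : [0,∞) → [0,∞)`, yields a monotone submodular set function `F⁽ᴺ⁾`. -/
theorem recursive_model_monotone_submodular
    {V : Type*} [Fintype V] [DecidableEq V]
    (N : ℕ) (hN : 1 ≤ N)
    (lam : ℝ) (hlam : lam ∈ Set.Icc (0 : ℝ) 1)
    (w : ℕ → V → ℝ) (hw : ∀ n v, 0 ≤ w n v)
    (φ : ℝ → ℝ)
    (hφ_mono : MonotoneOn φ (Set.Ici 0))
    (hφ_conc : ConcaveOn ℝ (Set.Ici 0) φ)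
    (hφ_nonneg : ∀ x ∈ Set.Ici (0 : ℝ), 0 ≤ φ x)
    (F : ℕ → Finset V → ℝ)
    (hF0 : ∀ S, F 0 S = ∑ s ∈ S, w 0 s)
    (hFrec : ∀ n, 1 ≤ n → n ≤ N → ∀ S : Finset V,
      F n S = φ (lam * F (n - 1) S + (1 - lam) * ∑ s ∈ S, w n s)) :
    IsMonotoneSetFun (F N) ∧ IsSubmodular (F N) :=
  recursive_model_monotone_submodular_general N lam hlam w hw φ hφ_mono hφ_conc hφ_nonneg F hF0
    hFrec
end

section
/- Let V be a finite ground set, let α ∈ (0, 1], let k ≥ 1 be an integer, and set κ := (1/k)·log(1/α). Let ϕ : ℝ → ℝ be twice differentiable with ϕ'(x) ≥ 0 and ϕ''(x) ≤ κ · ϕ'(x) for all x ≥ 0, and let m : V → [0, 1]. Define F(S) := ϕ(∑_{s∈S} m(s)). Then F is monotone, and F(s|S) ≥ α · F(s|T) for all S ⊆ T ⊆ V with |T| ≤ k and all s ∈ V \ T. -/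
/-!
Write `a = ∑_{S} m`, `b = ∑_{T} m` and `c = m s`, so that `0 ≤ a ≤ b ≤ |T| ≤ k`. The differential
inequality `ϕ'' ≤ κ ϕ'` makes `x ↦ e^{-κx} ϕ'(x)` antitone (Grönwall), hence
`ϕ'(b + t) ≤ e^{κ(b - a)} ϕ'(a + t) ≤ α⁻¹ ϕ'(a + t)` because `κ (b - a) ≤ κ k = log (1/α)`.
Integrating over `t ∈ [0, c]` gives `α (ϕ(b + c) - ϕ b) ≤ ϕ(a + c) - ϕ a`.
-/

open Real Set

section Calculus

variable {f g f' g' : ℝ → ℝ} {D : Set ℝ}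

theorem monotoneOn_of_forall_hasDerivAt_nonneg (hD : Convex ℝ D)
    (hf : ∀ x ∈ D, HasDerivAt f (f' x) x) (hf' : ∀ x ∈ D, 0 ≤ f' x) : MonotoneOn f D :=
  monotoneOn_of_hasDerivWithinAt_nonneg hD (HasDerivAt.continuousOn hf)
    (fun x hx ↦ (hf x (interior_subset hx)).hasDerivWithinAt) fun x hx ↦ hf' x (interior_subset hx)

theorem image_sub_le_image_sub_of_hasDerivAt_le (hD : Convex ℝ D)
    (hf : ∀ x ∈ D, HasDerivAt f (f' x) x) (hg : ∀ x ∈ D, HasDerivAt g (g' x) x)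
    (hle : ∀ x ∈ D, g' x ≤ f' x) {x y : ℝ} (hx : x ∈ D) (hy : y ∈ D) (hxy : x ≤ y) :
    g y - g x ≤ f y - f x := by
  have hmono : MonotoneOn (f - g) D :=
    monotoneOn_of_forall_hasDerivAt_nonneg hD (fun x hx ↦ (hf x hx).sub (hg x hx))
      fun x hx ↦ sub_nonneg.2 (hle x hx)
  have := hmono hx hy hxy
  simp only [Pi.sub_apply] at this
  linarith

theorem antitoneOn_exp_neg_mul_mul_of_deriv_le_mul {κ : ℝ} (hD : Convex ℝ D)
    (hg : ∀ x ∈ D, HasDerivAt g (g' x) x) (hle : ∀ x ∈ D, g' x ≤ κ * g x) :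
    AntitoneOn (fun x ↦ exp (-(κ * x)) * g x) D := by
  have hmono : MonotoneOn (fun x ↦ -(exp (-(κ * x)) * g x)) D := by
    refine monotoneOn_of_forall_hasDerivAt_nonneg hD
      (fun x hx ↦ ((((hasDerivAt_id x).const_mul κ).neg.exp).mul (hg x hx)).neg) fun x hx ↦ ?_
    have := mul_le_mul_of_nonneg_left (hle x hx) (exp_pos (-(κ * x))).le
    simp only [Pi.neg_apply, id]
    linarith
  exact fun x hx y hy hxy ↦ neg_le_neg_iff.1 (hmono hx hy hxy)

theorem le_exp_mul_sub_mul_of_deriv_le_mul {κ : ℝ} (hD : Convex ℝ D)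
    (hg : ∀ x ∈ D, HasDerivAt g (g' x) x) (hle : ∀ x ∈ D, g' x ≤ κ * g x)
    {x y : ℝ} (hx : x ∈ D) (hy : y ∈ D) (hxy : x ≤ y) :
    g y ≤ exp (κ * (y - x)) * g x := by
  have h := antitoneOn_exp_neg_mul_mul_of_deriv_le_mul hD hg hle hx hy hxy
  calc g y = exp (κ * y) * (exp (-(κ * y)) * g y) := by
        rw [← mul_assoc, ← exp_add, add_neg_cancel, exp_zero, one_mul]
    _ ≤ exp (κ * y) * (exp (-(κ * x)) * g x) := by gcongr
    _ = exp (κ * (y - x)) * g x := by rw [← mul_assoc, ← exp_add]; ring_nf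

end Calculus

theorem mul_exp_mul_le_one {α κ k d : ℝ} (hα : α ∈ Ioc 0 1) (hκ : κ = 1 / k * log (1 / α))
    (hd : 0 ≤ d) (hdk : d ≤ k) : α * exp (κ * d) ≤ 1 := by
  obtain ⟨hα0, hα1⟩ := hα
  have hlog : 0 ≤ log (1 / α) := log_nonneg (one_le_one_div hα0 hα1)
  -- `d / k ≤ 1` also holds for `k = 0`, where `1 / k = 0` and hence `κ = 0`.
  have hexp : κ * d ≤ log (1 / α) := by
    rw [hκ, mul_comm (1 / k), mul_assoc, one_div_mul_eq_div]
    exact mul_le_of_le_one_right hlog (div_le_one_of_le₀ hdk (hd.trans hdk))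
  calc α * exp (κ * d) ≤ α * (1 / α) := by
        gcongr
        exact (exp_le_exp.2 hexp).trans_eq (exp_log (by positivity))
    _ = 1 := mul_one_div_cancel hα0.ne'

theorem mul_increment_le_increment_of_deriv_le_mul {α κ k : ℝ} (hα : α ∈ Ioc 0 1)
    (hκ : κ = 1 / k * log (1 / α)) {ϕ ϕ' ϕ'' : ℝ → ℝ}
    (hd1 : ∀ x, HasDerivAt ϕ (ϕ' x) x) (hd2 : ∀ x, HasDerivAt ϕ' (ϕ'' x) x)
    (hϕ'_nonneg : ∀ x, 0 ≤ x → 0 ≤ ϕ' x) (hϕ'' : ∀ x, 0 ≤ x → ϕ'' x ≤ κ * ϕ' x)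
    {a b c : ℝ} (ha : 0 ≤ a) (hab : a ≤ b) (hbk : b - a ≤ k) (hc : 0 ≤ c) :
    α * (ϕ (c + b) - ϕ b) ≤ ϕ (c + a) - ϕ a := by
  have hderiv_ratio : ∀ t ∈ Ici (0 : ℝ), α * ϕ' (t + b) ≤ ϕ' (t + a) := fun t ht ↦ by
    have hta : 0 ≤ t + a := add_nonneg ht ha
    have hgronwall : ϕ' (t + b) ≤ exp (κ * (b - a)) * ϕ' (t + a) := by
      simpa using le_exp_mul_sub_mul_of_deriv_le_mul (convex_Ici 0) (fun x _ ↦ hd2 x)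
        hϕ'' (x := t + a) (y := t + b) hta (mem_Ici.2 (by linarith)) (by linarith)
    calc α * ϕ' (t + b) ≤ α * exp (κ * (b - a)) * ϕ' (t + a) := by
          rw [mul_assoc]; exact mul_le_mul_of_nonneg_left hgronwall hα.1.le
      _ ≤ 1 * ϕ' (t + a) := by
          gcongr
          · exact hϕ'_nonneg _ hta
          · exact mul_exp_mul_le_one hα hκ (sub_nonneg.2 hab) hbk
      _ = ϕ' (t + a) := one_mul _
  have h := image_sub_le_image_sub_of_hasDerivAt_le (convex_Ici 0)
    (fun t _ ↦ (hd1 (t + a)).comp_add_const t a)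
    (fun t _ ↦ ((hd1 (t + b)).comp_add_const t b).const_mul α) hderiv_ratio
    (mem_Ici.2 le_rfl) (mem_Ici.2 hc) hc
  simp only [zero_add] at h
  linarith

theorem alpha_submodular_of_differential_inequality_general
    {V : Type*} [DecidableEq V]
    (α : ℝ) (hα : α ∈ Set.Ioc (0 : ℝ) 1)
    (k : ℕ)
    (κ : ℝ) (hκ : κ = (1 / (k : ℝ)) * Real.log (1 / α))
    (ϕ ϕ' ϕ'' : ℝ → ℝ)
    (hd1 : ∀ x : ℝ, HasDerivAt ϕ (ϕ' x) x)
    (hd2 : ∀ x : ℝ, HasDerivAt ϕ' (ϕ'' x) x)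
    (hϕ'_nonneg : ∀ x : ℝ, 0 ≤ x → 0 ≤ ϕ' x)
    (hϕ'' : ∀ x : ℝ, 0 ≤ x → ϕ'' x ≤ κ * ϕ' x)
    (m : V → ℝ) (hm : ∀ v, m v ∈ Set.Icc (0 : ℝ) 1)
    (F : Finset V → ℝ) (hF : ∀ S, F S = ϕ (∑ s ∈ S, m s)) :
    (∀ (S : Finset V) (s : V), s ∉ S → 0 ≤ F (insert s S) - F S) ∧
    (∀ (S T : Finset V) (s : V), S ⊆ T → T.card ≤ k → s ∉ T →
      α * (F (insert s T) - F T) ≤ F (insert s S) - F S) := by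
  have hm0 : ∀ S : Finset V, 0 ≤ ∑ v ∈ S, m v := fun S ↦ Finset.sum_nonneg fun v _ ↦ (hm v).1
  have hmono : MonotoneOn ϕ (Ici 0) :=
    monotoneOn_of_forall_hasDerivAt_nonneg (convex_Ici 0) (fun x _ ↦ hd1 x) hϕ'_nonneg
  refine ⟨fun S s hs ↦ ?_, fun S T s hST hTk hsT ↦ ?_⟩
  · rw [hF, hF, Finset.sum_insert hs, sub_nonneg]
    exact hmono (hm0 S) (add_nonneg (hm s).1 (hm0 S)) (le_add_of_nonneg_left (hm s).1)
  · have hab : ∑ v ∈ S, m v ≤ ∑ v ∈ T, m v :=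
      Finset.sum_le_sum_of_subset_of_nonneg hST fun v _ _ ↦ (hm v).1
    have hbk : ∑ v ∈ T, m v ≤ k :=
      (Finset.sum_le_card_nsmul T m 1 fun v _ ↦ (hm v).2).trans (by simpa using hTk)
    rw [hF, hF, hF, hF, Finset.sum_insert hsT, Finset.sum_insert fun h ↦ hsT (hST h)]
    exact mul_increment_le_increment_of_deriv_le_mul hα hκ hd1 hd2 hϕ'_nonneg hϕ''
      (hm0 S) hab (by linarith [hm0 S]) (hm s).1

/-- if `ϕ` is twice differentiable with `ϕ' ≥ 0` and `ϕ'' ≤ κ·ϕ'` on `[0,∞)`,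
where `κ = (1/k)·log(1/α)`, and `m : V → [0,1]`, then `F(S) = ϕ(∑_{s∈S} m(s))` is monotone
and satisfies `F(s|S) ≥ α·F(s|T)` for all `S ⊆ T` with `|T| ≤ k` and `s ∉ T`. -/
theorem alpha_submodular_of_differential_inequality
    {V : Type*} [Fintype V] [DecidableEq V]
    (α : ℝ) (hα : α ∈ Set.Ioc (0 : ℝ) 1)
    (k : ℕ) (hk : 1 ≤ k)
    (κ : ℝ) (hκ : κ = (1 / (k : ℝ)) * Real.log (1 / α))
    (ϕ ϕ' ϕ'' : ℝ → ℝ)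
    (hd1 : ∀ x : ℝ, HasDerivAt ϕ (ϕ' x) x)
    (hd2 : ∀ x : ℝ, HasDerivAt ϕ' (ϕ'' x) x)
    (hϕ'_nonneg : ∀ x : ℝ, 0 ≤ x → 0 ≤ ϕ' x)
    (hϕ'' : ∀ x : ℝ, 0 ≤ x → ϕ'' x ≤ κ * ϕ' x)
    (m : V → ℝ) (hm : ∀ v, m v ∈ Set.Icc (0 : ℝ) 1)
    (F : Finset V → ℝ) (hF : ∀ S, F S = ϕ (∑ s ∈ S, m s)) :
    (∀ (S : Finset V) (s : V), s ∉ S → 0 ≤ F (insert s S) - F S) ∧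
    (∀ (S T : Finset V) (s : V), S ⊆ T → T.card ≤ k → s ∉ T →
      α * (F (insert s T) - F T) ≤ F (insert s S) - F S) :=
  alpha_submodular_of_differential_inequality_general α hα k κ hκ ϕ ϕ' ϕ'' hd1 hd2 hϕ'_nonneg hϕ'' m
    hm F hF
end

section
/- Let V be a finite ground set, let α > 0, let F : 2^V → ℝ be a monotone α-submodular set function, and let φ : ℝ → ℝ be nondecreasing and concave on an interval containing the range of F. Then the set function S ↦ φ(F(S)) is monotone α-submodular with the same constant α. -/
/-- For `α > 0`, a set function is *α-submodular* if `F(s|S) ≥ α·F(s|T)` whenever `S ⊆ T`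
and `s ∉ T`. -/
def IsAlphaSubmodular {V : Type*} [DecidableEq V] (α : ℝ) (F : Finset V → ℝ) : Prop :=
  ∀ (S T : Finset V) (s : V), S ⊆ T → s ∉ T →
    α * (F (insert s T) - F T) ≤ F (insert s S) - F S

/-- A monotone set function is monotone with respect to inclusion. -/
lemma monotone_subset {V : Type*} [DecidableEq V] {F : Finset V → ℝ}
    (hF : IsMonotoneSetFun F) {S T : Finset V} (hST : S ⊆ T) : F S ≤ F T := by
  have key : ∀ A : Finset V, F S ≤ F (S ∪ A) := by
    intro A
    induction A using Finset.induction_on with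
    | empty => simp
    | @insert a A ha ih =>
      rw [Finset.union_insert]
      by_cases h : a ∈ S ∪ A
      · rw [Finset.insert_eq_self.2 h]; exact ih
      · have := hF (S ∪ A) a h
        linarith
  have : S ∪ (T \ S) = T := Finset.union_sdiff_of_subset hST
  calc F S ≤ F (S ∪ (T \ S)) := key _
    _ = F T := by rw [this]

/-- a nondecreasing concave function on an interval (convex set) containing the
range of a monotone α-submodular set function yields a monotone α-submodular set function,
with the same constant α. -/
theorem concave_comp_alpha_submodular
    {V : Type*} [Fintype V] [DecidableEq V]
    (α : ℝ) (hα : 0 < α)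
    (F : Finset V → ℝ)
    (hF_mono : IsMonotoneSetFun F) (hF_sub : IsAlphaSubmodular α F)
    (I : Set ℝ) (hI_convex : Convex ℝ I) (hI_range : ∀ S, F S ∈ I)
    (φ : ℝ → ℝ) (hφ_mono : MonotoneOn φ I) (hφ_conc : ConcaveOn ℝ I φ) :
    IsMonotoneSetFun (fun S => φ (F S)) ∧ IsAlphaSubmodular α (fun S => φ (F S)) := by
  constructor
  · intro S s hs
    have h := hF_mono S s hs
    have := hφ_mono (hI_range S) (hI_range (insert s S)) (by linarith)
    simpa using this
  · intro S T s hST hsT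
    simp only
    set a := F S with ha_def
    set b := F (insert s S) with hb_def
    set c := F T with hc_def
    set d := F (insert s T) with hd_def
    have hsS : s ∉ S := fun h => hsT (hST h)
    have hab : a ≤ b := by have := hF_mono S s hsS; linarith
    have hcd : c ≤ d := by have := hF_mono T s hsT; linarith
    have hac : a ≤ c := monotone_subset hF_mono hST
    have hsub : α * (d - c) ≤ b - a := hF_sub S T s hST hsT
    have haI : a ∈ I := hI_range S
    have hbI : b ∈ I := hI_range (insert s S)
    have hcI : c ∈ I := hI_range T
    have hdI : d ∈ I := hI_range (insert s T)
    rcases eq_or_lt_of_le hcd with heq | hlt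
    · rw [← heq]
      have : φ a ≤ φ b := hφ_mono haI hbI hab
      simpa using this
    · -- c < d, so applying α-submodularity with S = T gives α ≤ 1
      have hα1 : α ≤ 1 := by
        have := hF_sub T T s (le_refl T) hsT
        nlinarith
      set t := α * (d - c) with ht_def
      have ht0 : 0 < t := mul_pos hα (by linarith)
      have htdc : t ≤ d - c := by nlinarith
      have hatd : a + t ≤ d := by linarith
      have hatb : a + t ≤ b := by linarith
      have hatI : a + t ∈ I := hI_convex.ordConnected.out haI hbI ⟨by linarith, hatb⟩
      -- concave slope comparisons via the convex function -φ
      have hconv : ConvexOn ℝ I (fun x => -φ x) := hφ_conc.neg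
      have had : a < d := lt_of_le_of_lt hac hlt
      -- slope(a,d) ≥ slope(c,d) for φ
      have h1 : ((-φ a) - (-φ d)) / (a - d) ≤ ((-φ c) - (-φ d)) / (c - d) :=
        hconv.secant_mono hdI haI hcI (ne_of_lt had) (ne_of_lt hlt) hac
      -- slope(a,a+t) ≥ slope(a,d) for φ
      have h2 : ((-φ (a + t)) - (-φ a)) / ((a + t) - a) ≤ ((-φ d) - (-φ a)) / (d - a) :=
        hconv.secant_mono haI hatI hdI (ne_of_gt (by linarith)) (ne_of_gt had) hatd
      rw [show -φ a - -φ d = φ d - φ a by ring, show -φ c - -φ d = φ d - φ c by ring,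
          show a - d = -(d - a) by ring, show c - d = -(d - c) by ring, div_neg, div_neg,
          neg_le_neg_iff] at h1
      rw [show -φ (a + t) - -φ a = -(φ (a + t) - φ a) by ring,
          show -φ d - -φ a = -(φ d - φ a) by ring, show a + t - a = t by ring,
          neg_div, neg_div, neg_le_neg_iff] at h2
      have hchain : (φ d - φ c) / (d - c) ≤ (φ (a + t) - φ a) / t := le_trans h1 h2
      have hdc0 : (0:ℝ) < d - c := by linarith
      have hprod : (φ d - φ c) * t ≤ (φ (a + t) - φ a) * (d - c) :=
        (div_le_div_iff₀ hdc0 ht0).mp hchain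
      have key : α * (φ d - φ c) ≤ φ (a + t) - φ a := by
        have : α * (φ d - φ c) * (d - c) ≤ (φ (a + t) - φ a) * (d - c) := by
          calc α * (φ d - φ c) * (d - c) = (φ d - φ c) * (α * (d - c)) := by ring
            _ ≤ (φ (a + t) - φ a) * (d - c) := by rw [← ht_def]; exact hprod
        exact le_of_mul_le_mul_right this hdc0
      have hmono : φ (a + t) ≤ φ b := hφ_mono hatI hbI hatb
      linarith
end

section
/- Let V be a finite ground set, let α ∈ (0, 1], let N ≥ 1, let λ ∈ [0, 1], let F^(0) : 2^V → ℝ be a monotone α-submodular set function taking nonnegative values, let m^(1), …, m^(N) be modular set functions with nonnegative weights, and let φ : [0, ∞) → [0, ∞) be nondecreasing and concave. Define F^(n)(S) := φ(λ · F^(n−1)(S) + (1 − λ) · m^(n)(S)) for 1 ≤ n ≤ N. Then F^(N) is a monotone α-submodular set function. -/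
lemma mono_of_isMonotone {V : Type*} [DecidableEq V] {G : Finset V → ℝ}
    (h : IsMonotoneSetFun G) {S T : Finset V} (hST : S ⊆ T) : G S ≤ G T := by
  classical
  have key : ∀ u : Finset V, ∀ S : Finset V, G S ≤ G (S ∪ u) := by
    intro u
    induction u using Finset.induction with
    | empty => intro S; simp
    | @insert a u' hx ih =>
      intro S
      rcases em (a ∈ S ∪ u') with hmem | hmem
      · rw [Finset.union_insert, Finset.insert_eq_self.mpr hmem]; exact ih S
      · rw [Finset.union_insert]
        have h1 := h (S ∪ u') a hmem
        have h2 := ih S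
        linarith
  calc G S ≤ G (S ∪ (T \ S)) := key _ S
    _ = G T := by rw [Finset.union_sdiff_of_subset hST]

lemma concave_incr {φ : ℝ → ℝ} (hc : ConcaveOn ℝ (Set.Ici 0) φ) {a b h : ℝ}
    (ha : 0 ≤ a) (hab : a ≤ b) (hh : 0 ≤ h) :
    φ (b + h) - φ b ≤ φ (a + h) - φ a := by
  rcases eq_or_lt_of_le (show a ≤ b + h by linarith) with heq | hlt
  · have hb : b = a := le_antisymm (by linarith) hab
    have hh0 : h = 0 := by linarith
    simp [hb, hh0]
  · have hd0 : (0:ℝ) < b + h - a := by linarith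
    set s := (b - a) / (b + h - a) with hs
    have hs0 : 0 ≤ s := div_nonneg (by linarith) hd0.le
    have hs1 : s ≤ 1 := by rw [hs, div_le_one hd0]; linarith
    have hsd : s * (b + h - a) = b - a := div_mul_cancel₀ _ hd0.ne'
    have hbh : (0:ℝ) ≤ b + h := by linarith
    have h1 := hc.2 (Set.mem_Ici.mpr ha) (Set.mem_Ici.mpr hbh)
      (by linarith : (0:ℝ) ≤ 1 - s) hs0 (by ring)
    have h2 := hc.2 (Set.mem_Ici.mpr ha) (Set.mem_Ici.mpr hbh)
      hs0 (by linarith : (0:ℝ) ≤ 1 - s) (by ring)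
    simp only [smul_eq_mul] at h1 h2
    have e1 : (1 - s) * a + s * (b + h) = b := by nlinarith [hsd]
    have e2 : s * a + (1 - s) * (b + h) = a + h := by nlinarith [hsd]
    rw [e1] at h1
    rw [e2] at h2
    linarith

lemma concave_chord {φ : ℝ → ℝ} (hc : ConcaveOn ℝ (Set.Ici 0) φ) {b d α : ℝ}
    (hb : 0 ≤ b) (hd : 0 ≤ d) (hα0 : 0 ≤ α) (hα1 : α ≤ 1) :
    α * (φ (b + d) - φ b) ≤ φ (b + α * d) - φ b := by
  have h1 := hc.2 (Set.mem_Ici.mpr hb) (Set.mem_Ici.mpr (by linarith : (0:ℝ) ≤ b + d))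
    (by linarith : (0:ℝ) ≤ 1 - α) hα0 (by ring)
  simp only [smul_eq_mul] at h1
  have e : (1 - α) * b + α * (b + d) = b + α * d := by ring
  rw [e] at h1
  linarith

lemma step_lemma {V : Type*} [DecidableEq V]
    {α lam : ℝ} (hα0 : 0 < α) (hα1 : α ≤ 1) (hl0 : 0 ≤ lam) (hl1 : lam ≤ 1)
    {φ : ℝ → ℝ} (hφ_mono : MonotoneOn φ (Set.Ici 0)) (hφ_conc : ConcaveOn ℝ (Set.Ici 0) φ)
    (hφ_nonneg : ∀ x ∈ Set.Ici (0:ℝ), 0 ≤ φ x)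
    {G : Finset V → ℝ} (hG0 : ∀ S, 0 ≤ G S) (hGm : IsMonotoneSetFun G)
    (hGs : IsAlphaSubmodular α G)
    {c : V → ℝ} (hc : ∀ v, 0 ≤ c v) :
    (∀ S, 0 ≤ φ (lam * G S + (1 - lam) * ∑ s ∈ S, c s)) ∧
    IsMonotoneSetFun (fun S => φ (lam * G S + (1 - lam) * ∑ s ∈ S, c s)) ∧
    IsAlphaSubmodular α (fun S => φ (lam * G S + (1 - lam) * ∑ s ∈ S, c s)) := by
  classical
  set g : Finset V → ℝ := fun S => lam * G S + (1 - lam) * ∑ s ∈ S, c s with hg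
  have hsum_nonneg : ∀ S : Finset V, (0:ℝ) ≤ ∑ s ∈ S, c s :=
    fun S => Finset.sum_nonneg (fun s _ => hc s)
  have hg0 : ∀ S, 0 ≤ g S := by
    intro S
    have := hG0 S
    have := hsum_nonneg S
    have h1 : 0 ≤ lam * G S := mul_nonneg hl0 (hG0 S)
    have h2 : 0 ≤ (1 - lam) * ∑ s ∈ S, c s := mul_nonneg (by linarith) (hsum_nonneg S)
    simp only [hg]; linarith
  have hgins : ∀ (S : Finset V) (s : V), s ∉ S →
      g (insert s S) - g S = lam * (G (insert s S) - G S) + (1 - lam) * c s := by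
    intro S s hs
    simp only [hg, Finset.sum_insert hs]; ring
  have hgmarg : ∀ (S : Finset V) (s : V), s ∉ S → 0 ≤ g (insert s S) - g S := by
    intro S s hs
    rw [hgins S s hs]
    have h1 : 0 ≤ lam * (G (insert s S) - G S) := mul_nonneg hl0 (hGm S s hs)
    have h2 : 0 ≤ (1 - lam) * c s := mul_nonneg (by linarith) (hc s)
    linarith
  have hgmono : ∀ {S T : Finset V}, S ⊆ T → g S ≤ g T :=
    fun hST => mono_of_isMonotone (fun S s hs => hgmarg S s hs) hST
  refine ⟨fun S => hφ_nonneg _ (Set.mem_Ici.mpr (hg0 S)), ?_, ?_⟩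
  · intro S s hs
    have := hφ_mono (Set.mem_Ici.mpr (hg0 S)) (Set.mem_Ici.mpr (hg0 (insert s S)))
      (by linarith [hgmarg S s hs])
    simpa using this
  · intro S T s hST hsT
    have hsS : s ∉ S := fun h => hsT (hST h)
    set a := g S
    set a' := g (insert s S)
    set b := g T
    set b' := g (insert s T)
    have hab : a ≤ b := hgmono hST
    have hbb' : b ≤ b' := by linarith [hgmarg T s hsT]
    have hkey : α * (b' - b) ≤ a' - a := by
      rw [show a' - a = g (insert s S) - g S from rfl, hgins S s hsS,
          show b' - b = g (insert s T) - g T from rfl, hgins T s hsT]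
      have h1 := hGs S T s hST hsT
      have h2 : α * ((1 - lam) * c s) ≤ (1 - lam) * c s := by
        nlinarith [mul_nonneg (by linarith : (0:ℝ) ≤ 1 - lam) (hc s)]
      nlinarith [mul_le_mul_of_nonneg_left h1 hl0]
    have ha0 : 0 ≤ a := hg0 S
    have hb0 : 0 ≤ b := hg0 T
    have hd0 : 0 ≤ b' - b := by linarith
    -- chain: α(φ b' - φ b) ≤ φ(b + α(b'-b)) - φ b ≤ φ(a + α(b'-b)) - φ a ≤ φ a' - φ a
    have c1 : α * (φ b' - φ b) ≤ φ (b + α * (b' - b)) - φ b := by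
      have := concave_chord hφ_conc hb0 hd0 hα0.le hα1
      simpa [show b + (b' - b) = b' by ring] using this
    have c2 : φ (b + α * (b' - b)) - φ b ≤ φ (a + α * (b' - b)) - φ a :=
      concave_incr hφ_conc ha0 hab (mul_nonneg hα0.le hd0)
    have c3 : φ (a + α * (b' - b)) ≤ φ a' := by
      apply hφ_mono (Set.mem_Ici.mpr (by positivity)) (Set.mem_Ici.mpr (hg0 _))
      linarith [hkey]
    simp only
    calc α * (φ b' - φ b) ≤ φ (b + α * (b' - b)) - φ b := c1
      _ ≤ φ (a + α * (b' - b)) - φ a := c2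
      _ ≤ φ a' - φ a := by linarith

/-- the recursion `F⁽ⁿ⁾(S) = φ(λ·F⁽ⁿ⁻¹⁾(S) + (1−λ)·m⁽ⁿ⁾(S))` for `1 ≤ n ≤ N`,
started from a nonnegative monotone α-submodular `F⁽⁰⁾`, built from modular functions
`m⁽ⁿ⁾(S) = ∑_{s∈S} w n s` with nonnegative weights and a nondecreasing concave
`φ : [0,∞) → [0,∞)`, yields a monotone α-submodular set function `F⁽ᴺ⁾`. -/
theorem recursive_model_alpha_submodular
    {V : Type*} [Fintype V] [DecidableEq V]
    (α : ℝ) (hα : α ∈ Set.Ioc (0 : ℝ) 1)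
    (N : ℕ) (hN : 1 ≤ N)
    (lam : ℝ) (hlam : lam ∈ Set.Icc (0 : ℝ) 1)
    (w : ℕ → V → ℝ) (hw : ∀ n v, 0 ≤ w n v)
    (φ : ℝ → ℝ)
    (hφ_mono : MonotoneOn φ (Set.Ici 0))
    (hφ_conc : ConcaveOn ℝ (Set.Ici 0) φ)
    (hφ_nonneg : ∀ x ∈ Set.Ici (0 : ℝ), 0 ≤ φ x)
    (F : ℕ → Finset V → ℝ)
    (hF0_nonneg : ∀ S, 0 ≤ F 0 S)
    (hF0_mono : IsMonotoneSetFun (F 0))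
    (hF0_sub : IsAlphaSubmodular α (F 0))
    (hFrec : ∀ n, 1 ≤ n → n ≤ N → ∀ S : Finset V,
      F n S = φ (lam * F (n - 1) S + (1 - lam) * ∑ s ∈ S, w n s)) :
    IsMonotoneSetFun (F N) ∧ IsAlphaSubmodular α (F N) := by
  obtain ⟨hα0, hα1⟩ := hα
  obtain ⟨hl0, hl1⟩ := hlam
  have claim : ∀ n, n ≤ N →
      (∀ S, 0 ≤ F n S) ∧ IsMonotoneSetFun (F n) ∧ IsAlphaSubmodular α (F n) := by
    intro n
    induction n with
    | zero => exact fun _ => ⟨hF0_nonneg, hF0_mono, hF0_sub⟩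
    | succ k ih =>
      intro hk
      obtain ⟨ih0, ihm, ihs⟩ := ih (by omega)
      have hEq : ∀ S : Finset V,
          F (k + 1) S = φ (lam * F k S + (1 - lam) * ∑ s ∈ S, w (k + 1) s) := by
        intro S
        simpa using hFrec (k + 1) (by omega) hk S
      obtain ⟨s0, s1, s2⟩ := step_lemma hα0 hα1 hl0 hl1 hφ_mono hφ_conc hφ_nonneg
        ih0 ihm ihs (hw (k + 1))
      refine ⟨fun S => by rw [hEq]; exact s0 S, ?_, ?_⟩
      · intro S s hs
        rw [hEq, hEq]
        exact s1 S s hs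
      · intro S T s hST hsT
        rw [hEq, hEq, hEq, hEq]
        exact s2 S T s hST hsT
  exact (claim N le_rfl).2
end

section
/- Let φ : ℝ → ℝ be differentiable with φ'(x) ≥ 0 for all x, let κ ≥ 0, and suppose the function x ↦ e^{−κx} · φ'(x) is nonincreasing on ℝ. Then for all real numbers u ≤ v and all c ≥ 0, one has φ(u + c) − φ(u) ≥ e^{−κ(v − u)} · (φ(v + c) − φ(v)). -/
/-!
Write `d = v - u` and `a = e^{-κd}`. Antitonicity of `e^{-κx} φ'(x)` says exactly that
`a φ'(x) ≤ φ'(x - d)` for every `x`, so `x ↦ φ(x - d) - a φ(x)` has nonnegative derivative and is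
monotone; comparing its values at `v` and `v + c` is the claim.
-/

open Real

lemma exp_mul_le_of_antitone_exp_mul {f : ℝ → ℝ} {κ x y : ℝ}
    (hanti : Antitone fun x => exp (-κ * x) * f x) (hyx : y ≤ x) :
    exp (-κ * (x - y)) * f x ≤ f y := by
  have h := mul_le_mul_of_nonneg_left (hanti hyx) (exp_pos (κ * y)).le
  calc exp (-κ * (x - y)) * f x = exp (κ * y) * (exp (-κ * x) * f x) := by
        rw [← mul_assoc, ← exp_add]; ring_nf
    _ ≤ exp (κ * y) * (exp (-κ * y) * f y) := h
    _ = f y := by rw [← mul_assoc, ← exp_add]; simp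

lemma monotone_comp_sub_sub_mul_of_mul_deriv_le {φ φ' : ℝ → ℝ} {a d : ℝ}
    (hd : ∀ x, HasDerivAt φ (φ' x) x) (hle : ∀ x, a * φ' x ≤ φ' (x - d)) :
    Monotone fun x => φ (x - d) - a * φ x := by
  refine monotone_of_hasDerivAt_nonneg (f' := fun x => φ' (x - d) - a * φ' x) (fun x => ?_)
    fun x => sub_nonneg.2 (hle x)
  exact ((hd (x - d)).comp_sub_const x d).sub ((hd x).const_mul a)

theorem increment_comparison_of_exp_antitone_general
    (φ φ' : ℝ → ℝ) (κ : ℝ)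
    (hd : ∀ x : ℝ, HasDerivAt φ (φ' x) x)
    (hanti : Antitone (fun x : ℝ => Real.exp (-κ * x) * φ' x)) :
    ∀ (u v c : ℝ), u ≤ v → 0 ≤ c →
      Real.exp (-κ * (v - u)) * (φ (v + c) - φ v) ≤ φ (u + c) - φ u := by
  intro u v c huv hc
  have hshift : ∀ x, exp (-κ * (v - u)) * φ' x ≤ φ' (x - (v - u)) := fun x => by
    simpa using exp_mul_le_of_antitone_exp_mul hanti (sub_le_self x (sub_nonneg.2 huv))
  have h := monotone_comp_sub_sub_mul_of_mul_deriv_le hd hshift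
    (le_add_of_nonneg_right hc : v ≤ v + c)
  simp only [sub_sub_cancel, add_sub_sub_cancel, add_comm c u] at h
  linarith

/-- if `φ` is differentiable with nonnegative derivative `φ'`, `κ ≥ 0`, and
`x ↦ e^{−κx}·φ'(x)` is nonincreasing, then for `u ≤ v` and `c ≥ 0`,
`φ(u+c) − φ(u) ≥ e^{−κ(v−u)}·(φ(v+c) − φ(v))`. -/
theorem increment_comparison_of_exp_antitone
    (φ φ' : ℝ → ℝ) (κ : ℝ) (hκ : 0 ≤ κ)
    (hd : ∀ x : ℝ, HasDerivAt φ (φ' x) x)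
    (hφ'_nonneg : ∀ x : ℝ, 0 ≤ φ' x)
    (hanti : Antitone (fun x : ℝ => Real.exp (-κ * x) * φ' x)) :
    ∀ (u v c : ℝ), u ≤ v → 0 ≤ c →
      Real.exp (-κ * (v - u)) * (φ (v + c) - φ v) ≤ φ (u + c) - φ u :=
  increment_comparison_of_exp_antitone_general φ φ' κ hd hanti
end
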